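/- arXiv:0711.3385 — 2 statements merged into one kernel-verified Lean document; each statement's English description precedes it below -/
import Mathlib

section
/- Assume that for each ℓ ∈ {1,…,n−1} and every j ∈ I_n with j > ℓ, the point Y^{{ℓ}} is below γ_j and every point y ∈ γ_ℓ ∩ π_1 ∩ ⋯ ∩ π_{ℓ−1} is on or below γ_j. Then the equilibrium Y^{{n}} (the point whose n-th coordinate is 1/a_{nn} and whose other coordinates are 0) is a global attractor. -/
open Filter Topology Set

noncomputable section

/-- `alphaLV a i x = Σ_j a i j * x j`. -/
def alphaLV {n : ℕ} (a : Fin n → Fin n → ℝ) (i : Fin n) (x : Fin n → ℝ) : ℝ :=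
  ∑ j, a i j * x j

/-- A solution of the Lotka–Volterra system `x_i' = b_i x_i (1 - α_i x)` on `[0,∞)`
with values in the nonnegative orthant. -/
def IsLVSolution {n : ℕ} (b : Fin n → ℝ) (a : Fin n → Fin n → ℝ)
    (x : ℝ → Fin n → ℝ) : Prop :=
  (∀ t ∈ Set.Ici (0:ℝ), ∀ i, 0 ≤ x t i) ∧
  (∀ t ∈ Set.Ici (0:ℝ), ∀ i,
    HasDerivWithinAt (fun s => x s i)
      (b i * x t i * (1 - alphaLV a i (x t))) (Set.Ici 0) t)

/-- An equilibrium of the Lotka–Volterra system in `ℝ^n_+`. -/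
def IsLVEquilibrium {n : ℕ} (b : Fin n → ℝ) (a : Fin n → Fin n → ℝ)
    (y : Fin n → ℝ) : Prop :=
  (∀ i, 0 ≤ y i) ∧ ∀ i, b i * y i * (1 - alphaLV a i y) = 0

/-- `y` is a global attractor: it is an equilibrium and every solution starting in
the open positive orthant converges to it. -/
def IsGlobalAttractor {n : ℕ} (b : Fin n → ℝ) (a : Fin n → Fin n → ℝ)
    (y : Fin n → ℝ) : Prop :=
  IsLVEquilibrium b a y ∧
  ∀ x : ℝ → Fin n → ℝ, IsLVSolution b a x → (∀ i, 0 < x 0 i) →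
    ∀ i, Tendsto (fun t => x t i) atTop (nhds (y i))

open Classical in
/-- The projection `u^J`: `u` on `J`, zero off `J`. -/
def projLV {n : ℕ} (u : Fin n → ℝ) (J : Set (Fin n)) : Fin n → ℝ :=
  fun i => if i ∈ J then u i else 0

open Classical in
/-- The vector `U` of (3.1), with the index set `I_n` replaced by `S`. -/
def Uvec {n : ℕ} (a : Fin n → Fin n → ℝ) (S : Set (Fin n)) (i : Fin n) : ℝ :=
  if ∃ j ∈ S, j ≠ i ∧ (a i i ≤ a j i ∨ a i j = 0) then (a i i)⁻¹
  else if (∀ j ∈ S, j ≠ i → a j i < a i i) ∧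
      (∀ j ∈ S, ∀ k ∈ S, j ≠ i → k ≠ i → a j k ≤ a i k) then 0
  else sSup {r | ∃ j ∈ S, ∃ k ∈ S, j ≠ i ∧ k ≠ i ∧ a i j < a k j ∧
      r = (a k j - a i j) / (a i i * a k j - a i j * a k i)}

/-- Condition `(C_k)` relative to a vector `U`: either `U^{I_n∖{k}}` is below `γ_k`,
or every point of `γ_k ∩ [0, U^{I_n∖{k}}]` is above `γ_j` for every `j ≠ k`. -/
def CondC {n : ℕ} (a : Fin n → Fin n → ℝ) (U : Fin n → ℝ) (k : Fin n) : Prop :=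
  alphaLV a k (projLV U (({k} : Set (Fin n))ᶜ)) < 1 ∨
  ∀ j, j ≠ k → ∀ x : Fin n → ℝ,
    (∀ i, 0 ≤ x i ∧ x i ≤ projLV U (({k} : Set (Fin n))ᶜ) i) →
    alphaLV a k x = 1 → 1 < alphaLV a j x

/-- Condition (3.7) for the pair `(i,j)` relative to a vector `U`. -/
def Cond37 {n : ℕ} (a : Fin n → Fin n → ℝ) (U : Fin n → ℝ) (i j : Fin n) : Prop :=
  max 0 (a i j / a j j * (1 - alphaLV a j (projLV U (({i, j} : Set (Fin n))ᶜ))))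
    < 1 - alphaLV a i (projLV U (({i, j} : Set (Fin n))ᶜ))

/-- The vector `Y = (1/a₁₁, …, 1/aₙₙ)`. -/
def Yvec {n : ℕ} (a : Fin n → Fin n → ℝ) : Fin n → ℝ := fun i => (a i i)⁻¹


/-!
Testing the hypotheses on points of `γ_ℓ` with at most two nonzero coordinates shows that for
`ℓ < j` species `j` is weaker than `ℓ` against every species `k ≥ ℓ`: `a_jk ≤ a_ℓk`, strictly for
`k = ℓ`. One then proves `x_ℓ → 0` for `ℓ < n` by induction on `ℓ`. The roots `ξ_j = x_j ^ (1/b_j)`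
have logarithmic derivative `1 - α_j x`, so once the species below `ℓ` have vanished,
`u = log ξ_ℓ - log Σ_{j>ℓ} ξ_j` satisfies `u' ≤ -γ x_ℓ + o(1)` with `γ = min_{j>ℓ} (a_ℓℓ - a_jℓ)`.
Near the face `x_k = 0 (k ≥ ℓ)` every `α_i` is small, so `Σ_{j≥ℓ} ξ_j` stays bounded away from `0`;
hence `x_ℓ` is bounded below while `u ≥ K`, which forces `u → -∞` and `ξ_ℓ → 0`.
Finally `x_n` obeys a logistic equation with a vanishing perturbation and tends to `1/a_nn`.
-/

theorem eventually_le_of_hasDerivAt_le_neg {g g' : ℝ → ℝ} {m h : ℝ} (hh : 0 < h)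
    (hd : ∀ᶠ t in atTop, HasDerivAt g (g' t) t)
    (hneg : ∀ᶠ t in atTop, m ≤ g t → g' t ≤ -h) :
    ∀ᶠ t in atTop, g t ≤ m := by
  obtain ⟨T, hT⟩ := eventually_atTop.1 (hd.and hneg)
  have hcont : ∀ s t, T ≤ s → ContinuousOn g (Icc s t) := fun s t hs u hu =>
    (hT u (hs.trans hu.1)).1.continuousAt.continuousWithinAt
  have hderiv : ∀ s, T ≤ s → ∀ u ∈ Ici s, HasDerivWithinAt g (g' u) (Ici u) u :=
    fun s hs u hu => (hT u (hs.trans hu)).1.hasDerivWithinAt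
  obtain ⟨t₀, ht₀, hgt₀⟩ : ∃ t₀, T ≤ t₀ ∧ g t₀ ≤ m := by
    -- otherwise `g` decreases at rate `h` and is below `m` at time `T + (g T - m) / h`
    by_contra! hgt
    set t := T + (g T - m) / h
    have hTt : T ≤ t := le_add_of_nonneg_right (div_nonneg (sub_nonneg.2 (hgt T le_rfl).le) hh.le)
    have hlin := image_le_of_deriv_right_le_deriv_boundary (hcont T t le_rfl)
      (fun u hu => hderiv T le_rfl u hu.1) (B := fun s => g T - h * (s - T)) (by simp)
      (by fun_prop) (fun u _ => ((hasDerivAt_id u).sub_const T |>.const_mul h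
        |>.const_sub (g T)).hasDerivWithinAt)
      (fun u hu => by simpa using (hT u hu.1).2 (hgt u hu.1).le) ⟨hTt, le_rfl⟩
    have : h * (t - T) = g T - m := by simp only [t]; field_simp; ring
    linarith [hgt t hTt]
  filter_upwards [eventually_ge_atTop t₀] with t ht
  exact image_le_of_deriv_right_lt_deriv_boundary (hcont t₀ t ht₀)
    (fun u hu => hderiv t₀ ht₀ u hu.1) (B := fun _ => m) hgt₀ (fun _ => hasDerivAt_const _ _)
    (fun u hu hgu => by simpa using ((hT u (ht₀.trans hu.1)).2 hgu.ge).trans_lt (neg_neg_of_pos hh))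
    ⟨ht, le_rfl⟩

theorem eventually_ge_of_hasDerivAt_ge_pos {g g' : ℝ → ℝ} {m h : ℝ} (hh : 0 < h)
    (hd : ∀ᶠ t in atTop, HasDerivAt g (g' t) t)
    (hpos : ∀ᶠ t in atTop, g t ≤ m → h ≤ g' t) :
    ∀ᶠ t in atTop, m ≤ g t := by
  have := eventually_le_of_hasDerivAt_le_neg (g := -g) (g' := -g') (m := -m) hh
    (hd.mono fun t ht => ht.neg) (hpos.mono fun t ht hgt => by
      simp only [Pi.neg_apply, neg_le_neg_iff] at hgt ⊢; exact ht hgt)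
  exact this.mono fun t ht => by simpa using ht

theorem pos_of_hasDerivWithinAt_ge_mul {f f' : ℝ → ℝ} {a b K : ℝ} (hab : a ≤ b)
    (hf : ContinuousOn f (Icc a b)) (hf' : ∀ x ∈ Ico a b, HasDerivWithinAt f (f' x) (Ici x) x)
    (bound : ∀ x ∈ Ico a b, K * f x ≤ f' x) (ha : 0 < f a) : 0 < f b := by
  have := le_gronwallBound_of_liminf_deriv_right_le (f := -f) (f' := -f') (δ := -f a) (K := K)
    (ε := 0) hf.neg (fun x hx r hr => (hf' x hx).neg.liminf_right_slope_le hr) le_rfl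
    (fun x hx => by simpa using bound x hx) b ⟨hab, le_rfl⟩
  rw [gronwallBound_ε0, Pi.neg_apply] at this
  nlinarith [Real.exp_pos (K * (b - a))]

section alphaLV

variable {n : ℕ} (a : Fin n → Fin n → ℝ)

theorem alphaLV_add (i : Fin n) (x y : Fin n → ℝ) :
    alphaLV a i (x + y) = alphaLV a i x + alphaLV a i y := by
  simp only [alphaLV, Pi.add_apply, mul_add, Finset.sum_add_distrib]

theorem alphaLV_single (i k : Fin n) (s : ℝ) : alphaLV a i (Pi.single k s) = a i k * s := by
  simp [alphaLV, Pi.single_apply]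

theorem continuous_alphaLV (i : Fin n) : Continuous (alphaLV a i) := by
  unfold alphaLV
  fun_prop

theorem exists_pos_forall_alphaLV_le_half :
    ∃ δ > 0, ∀ y : Fin n → ℝ, (∀ k, |y k| ≤ δ) → ∀ i, alphaLV a i y ≤ 1 / 2 := by
  have : ∀ᶠ y in 𝓝 (0 : Fin n → ℝ), ∀ i, alphaLV a i y < 1 / 2 :=
    eventually_all.2 fun i => (continuous_alphaLV a i).continuousAt.eventually_lt
      continuousAt_const (by simp [alphaLV])
  obtain ⟨ε, hε, hball⟩ := Metric.eventually_nhds_iff.1 this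
  refine ⟨ε / 2, half_pos hε, fun y hy i => (hball ?_ i).le⟩
  refine ((dist_pi_le_iff (half_pos hε).le).2 fun k => ?_).trans_lt (half_lt_self hε)
  simpa using hy k

variable {a}

theorem mul_le_alphaLV (hnn : ∀ i j, 0 ≤ a i j) {x : Fin n → ℝ} (hx : ∀ k, 0 ≤ x k)
    (i : Fin n) : a i i * x i ≤ alphaLV a i x :=
  Finset.single_le_sum (f := fun k => a i k * x k) (fun k _ => mul_nonneg (hnn i k) (hx k))
    (Finset.mem_univ i)

theorem sub_mul_le_alphaLV_sub (hnn : ∀ i j, 0 ≤ a i j) {l j : Fin n}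
    (hle : ∀ k, l ≤ k → a j k ≤ a l k) {y : Fin n → ℝ} (hy : ∀ k, 0 ≤ y k) :
    (a l l - a j l) * y l ≤
      alphaLV a l y - alphaLV a j y + ∑ k ∈ Finset.Iio l, a j k * y k := by
  have hlow : ∑ k ∈ Finset.Iio l, a j k * y k = ∑ k, if k < l then a j k * y k else 0 := by
    rw [← Finset.sum_filter]
    congr 1
    ext
    simp
  rw [alphaLV, alphaLV, ← Finset.sum_sub_distrib, hlow, ← Finset.sum_add_distrib]
  refine le_of_eq_of_le (by simp [sub_mul])
    (Finset.single_le_sum (fun k _ => ?_) (Finset.mem_univ l))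
  split_ifs with hk
  · nlinarith [mul_nonneg (hnn l k) (hy k)]
  · nlinarith [mul_nonneg (sub_nonneg.2 (hle k (not_lt.1 hk))) (hy k)]

end alphaLV

theorem projLV_singleton {n : ℕ} (u : Fin n → ℝ) (l : Fin n) :
    projLV u {l} = Pi.single l (u l) := by
  funext i
  by_cases hi : i = l <;> simp [projLV, hi]

section Coefficients

variable {n : ℕ} {a : Fin n → Fin n → ℝ}

theorem lt_diag_of_alphaLV_single_lt_one (hdiag : ∀ i, 0 < a i i) {l j : Fin n}
    (hbelow : alphaLV a j (projLV (Yvec a) {l}) < 1) : a j l < a l l := by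
  rwa [projLV_singleton, alphaLV_single, Yvec, ← div_eq_mul_inv, div_lt_one (hdiag l)] at hbelow

theorem le_of_alphaLV_le_one_on_face (hdiag : ∀ i, 0 < a i i) (hnn : ∀ i j, 0 ≤ a i j)
    {l j k : Fin n} (hlk : l < k)
    (hface : ∀ y : Fin n → ℝ, (∀ i, 0 ≤ y i) → alphaLV a l y = 1 →
      (∀ t : Fin n, t < l → y t = 0) → alphaLV a j y ≤ 1) :
    a j k ≤ a l k := by
  by_contra! hlt
  have hsum : 0 < a j k + a l k := by linarith [hnn l k]
  -- a point of `γ_l` on the face spanned by `e_l, e_k` lying strictly above `γ_j`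
  set s := 2 / (a j k + a l k)
  set u := (1 - a l k * s) / a l l
  have hls : a l k * s ≤ 1 := by
    rw [mul_div_assoc', div_le_one hsum]
    linarith
  have hjs : 1 < a j k * s := by
    rw [mul_div_assoc', one_lt_div hsum]
    linarith
  have hu : 0 ≤ u := div_nonneg (sub_nonneg.2 hls) (hdiag l).le
  have hy0 : (0 : Fin n → ℝ) ≤ Pi.single l u + Pi.single k s :=
    add_nonneg (Pi.single_nonneg.2 hu) (Pi.single_nonneg.2 (div_nonneg zero_le_two hsum.le))
  have hy := hface _ hy0
    (by rw [alphaLV_add, alphaLV_single, alphaLV_single, mul_div_cancel₀ _ (hdiag l).ne']; ring)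
    (fun t ht => by simp [ht.ne, (ht.trans hlk).ne])
  rw [alphaLV_add, alphaLV_single, alphaLV_single] at hy
  nlinarith [mul_nonneg (hnn j l) hu]

theorem le_of_alphaLV_single_lt_one_of_face (hdiag : ∀ i, 0 < a i i) (hnn : ∀ i j, 0 ≤ a i j)
    {l j : Fin n} (hbelow : alphaLV a j (projLV (Yvec a) {l}) < 1)
    (hface : ∀ y : Fin n → ℝ, (∀ i, 0 ≤ y i) → alphaLV a l y = 1 →
      (∀ t : Fin n, t < l → y t = 0) → alphaLV a j y ≤ 1)
    {k : Fin n} (hlk : l ≤ k) : a j k ≤ a l k := by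
  rcases hlk.eq_or_lt with rfl | hlk
  · exact (lt_diag_of_alphaLV_single_lt_one hdiag hbelow).le
  · exact le_of_alphaLV_le_one_on_face hdiag hnn hlk hface

end Coefficients

/-- Along a solution each summand has logarithmic derivative `1 - α_j x`, free of the rate `b_j`. -/
def rootSum {n : ℕ} (b : Fin n → ℝ) (S : Finset (Fin n)) (y : Fin n → ℝ) : ℝ :=
  ∑ j ∈ S, y j ^ (b j)⁻¹

section rootSum

variable {n : ℕ} {b : Fin n → ℝ} {S : Finset (Fin n)} {y : Fin n → ℝ}

theorem rootSum_pos (hS : S.Nonempty) (hy : ∀ k, 0 < y k) : 0 < rootSum b S y :=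
  Finset.sum_pos (fun j _ => Real.rpow_pos_of_pos (hy j) _) hS

theorem rpow_inv_le_rootSum (hy : ∀ k, 0 ≤ y k) {k : Fin n} (hk : k ∈ S) :
    y k ^ (b k)⁻¹ ≤ rootSum b S y :=
  Finset.single_le_sum (f := fun j => y j ^ (b j)⁻¹) (fun j _ => Real.rpow_nonneg (hy j) _) hk

theorem rootSum_Ici (l : Fin n) :
    rootSum b (Finset.Ici l) y = y l ^ (b l)⁻¹ + rootSum b (Finset.Ioi l) y :=
  (Finset.add_sum_Ioi_eq_sum_Ici _).symm

theorem one_sub_alphaLV_sub_div_rootSum_le {a : Fin n → Fin n → ℝ} (hnn : ∀ i j, 0 ≤ a i j)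
    {l : Fin n} (hS : (Finset.Ioi l).Nonempty) (hcoef : ∀ j, l < j → ∀ k, l ≤ k → a j k ≤ a l k)
    {γ : ℝ} (hγ : ∀ j, l < j → γ ≤ a l l - a j l) (hy : ∀ k, 0 < y k) :
    (1 - alphaLV a l y) -
        (∑ j ∈ Finset.Ioi l, y j ^ (b j)⁻¹ * (1 - alphaLV a j y)) / rootSum b (Finset.Ioi l) y ≤
      -(γ * y l) + ∑ i, ∑ k ∈ Finset.Iio l, a i k * y k := by
  set w := ∑ i, ∑ k ∈ Finset.Iio l, a i k * y k
  suffices rootSum b (Finset.Ioi l) y * (1 - alphaLV a l y + γ * y l - w) ≤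
      ∑ j ∈ Finset.Ioi l, y j ^ (b j)⁻¹ * (1 - alphaLV a j y) by
    have := (le_div_iff₀' (rootSum_pos hS hy)).2 this
    linarith
  rw [rootSum, Finset.sum_mul]
  refine Finset.sum_le_sum fun j hj =>
    mul_le_mul_of_nonneg_left ?_ (Real.rpow_nonneg (hy j).le _)
  have hlj := Finset.mem_Ioi.1 hj
  have hcmp := sub_mul_le_alphaLV_sub hnn (hcoef j hlj) fun k => (hy k).le
  have hγj := mul_le_mul_of_nonneg_right (hγ j hlj) (hy l).le
  have hw : ∑ k ∈ Finset.Iio l, a j k * y k ≤ w :=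
    Finset.single_le_sum (f := fun i => ∑ k ∈ Finset.Iio l, a i k * y k)
      (fun i _ => Finset.sum_nonneg fun k _ => mul_nonneg (hnn i k) (hy k).le)
      (Finset.mem_univ j)
  linarith

end rootSum

namespace IsLVSolution

variable {n : ℕ} {b : Fin n → ℝ} {a : Fin n → Fin n → ℝ} {x : ℝ → Fin n → ℝ}

theorem continuousOn (hsol : IsLVSolution b a x) (i : Fin n) :
    ContinuousOn (fun t => x t i) (Ici 0) :=
  fun t ht => (hsol.2 t ht i).continuousWithinAt

theorem hasDerivAt (hsol : IsLVSolution b a x) (i : Fin n) {t : ℝ} (ht : 0 < t) :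
    HasDerivAt (fun s => x s i) (b i * x t i * (1 - alphaLV a i (x t))) t :=
  (hsol.2 t ht.le i).hasDerivAt (Ici_mem_nhds ht)

theorem pos (hsol : IsLVSolution b a x) (hx0 : ∀ i, 0 < x 0 i) (i : Fin n) {t : ℝ}
    (ht : 0 ≤ t) : 0 < x t i := by
  have hrate : ContinuousOn (fun s => b i * (1 - alphaLV a i (x s))) (Icc 0 t) :=
    continuousOn_const.mul (continuousOn_const.sub ((continuous_alphaLV a i).comp_continuousOn
      (continuousOn_pi.2 fun k => (hsol.continuousOn k).mono Icc_subset_Ici_self)))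
  obtain ⟨K, hK⟩ := isCompact_Icc.bddBelow_image hrate
  refine pos_of_hasDerivWithinAt_ge_mul (K := K) ht
    ((hsol.continuousOn i).mono Icc_subset_Ici_self)
    (fun s hs => (hsol.2 s hs.1 i).mono (Ici_subset_Ici.2 hs.1)) (fun s hs => ?_) (hx0 i)
  have hKs : K ≤ b i * (1 - alphaLV a i (x s)) := hK ⟨s, Ico_subset_Icc_self hs, rfl⟩
  nlinarith [hsol.1 s hs.1 i]

theorem hasDerivAt_log (hsol : IsLVSolution b a x) (hx0 : ∀ i, 0 < x 0 i) (i : Fin n)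
    {t : ℝ} (ht : 0 < t) :
    HasDerivAt (fun s => Real.log (x s i)) (b i * (1 - alphaLV a i (x t))) t := by
  have hx := (hsol.pos hx0 i ht.le).ne'
  convert (hsol.hasDerivAt i ht).log hx using 1
  field_simp

theorem hasDerivAt_rpow_inv (hb : ∀ i, 0 < b i) (hsol : IsLVSolution b a x)
    (hx0 : ∀ i, 0 < x 0 i) (i : Fin n) {t : ℝ} (ht : 0 < t) :
    HasDerivAt (fun s => x s i ^ (b i)⁻¹) (x t i ^ (b i)⁻¹ * (1 - alphaLV a i (x t))) t := by
  have hx := hsol.pos hx0 i ht.le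
  convert (hsol.hasDerivAt i ht).rpow_const (p := (b i)⁻¹) (Or.inl hx.ne') using 1
  rw [Real.rpow_sub_one hx.ne']
  field_simp [(hb i).ne']

theorem hasDerivAt_rootSum (hb : ∀ i, 0 < b i) (hsol : IsLVSolution b a x)
    (hx0 : ∀ i, 0 < x 0 i) (S : Finset (Fin n)) {t : ℝ} (ht : 0 < t) :
    HasDerivAt (fun s => rootSum b S (x s))
      (∑ j ∈ S, x t j ^ (b j)⁻¹ * (1 - alphaLV a j (x t))) t :=
  HasDerivAt.fun_sum fun j _ => hsol.hasDerivAt_rpow_inv hb hx0 j ht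

theorem eventually_le_of_inv_diag_lt (hb : ∀ i, 0 < b i) (hdiag : ∀ i, 0 < a i i)
    (hnn : ∀ i j, 0 ≤ a i j) (hsol : IsLVSolution b a x) {i : Fin n} {c : ℝ}
    (hc : (a i i)⁻¹ < c) : ∀ᶠ t in atTop, x t i ≤ c := by
  have hc0 : 0 < c := (inv_pos.2 (hdiag i)).trans hc
  have hgap : 0 < a i i * c - 1 := by rwa [sub_pos, ← inv_mul_lt_iff₀ (hdiag i), mul_one]
  refine eventually_le_of_hasDerivAt_le_neg (h := b i * c * (a i i * c - 1))
    (mul_pos (mul_pos (hb i) hc0) hgap)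
    ((eventually_gt_atTop 0).mono fun t ht => hsol.hasDerivAt i ht) ?_
  filter_upwards [eventually_ge_atTop 0] with t ht hxc
  have hα := (mul_le_mul_of_nonneg_left hxc (hdiag i).le).trans
    (mul_le_alphaLV hnn (hsol.1 t ht) i)
  have hbx := mul_le_mul_of_nonneg_left hxc (hb i).le
  nlinarith [mul_nonneg (hb i).le (hsol.1 t ht i)]

theorem eventually_ge_of_lt_inv_diag (hb : ∀ i, 0 < b i) (hdiag : ∀ i, 0 < a i i)
    (hsol : IsLVSolution b a x) (hx0 : ∀ i, 0 < x 0 i) {e : Fin n}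
    (hext : ∀ k ≠ e, Tendsto (fun t => x t k) atTop (𝓝 0)) {c : ℝ} (hc0 : 0 < c)
    (hc : c < (a e e)⁻¹) : ∀ᶠ t in atTop, c ≤ x t e := by
  have hrest : Tendsto (fun t => ∑ k ∈ Finset.univ.erase e, a e k * x t k) atTop (𝓝 0) := by
    simpa only [mul_zero, Finset.sum_const_zero] using tendsto_finsetSum _ fun k hk =>
      (hext k (Finset.ne_of_mem_erase hk)).const_mul (a e k)
  have hgap : 0 < 1 - a e e * c := by rwa [sub_pos, ← lt_inv_mul_iff₀ (hdiag e), mul_one]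
  have hlog := eventually_ge_of_hasDerivAt_ge_pos (m := Real.log c)
    (h := b e * ((1 - a e e * c) / 2)) (mul_pos (hb e) (half_pos hgap))
    ((eventually_gt_atTop 0).mono fun t ht => hsol.hasDerivAt_log hx0 e ht) ?_
  · filter_upwards [hlog, eventually_ge_atTop 0] with t ht ht0
    exact (Real.log_le_log_iff hc0 (hsol.pos hx0 e ht0)).1 ht
  filter_upwards [hrest.eventually (eventually_le_nhds (half_pos hgap)),
    eventually_ge_atTop 0] with t hrest ht hxc
  rw [Real.log_le_log_iff (hsol.pos hx0 e ht) hc0] at hxc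
  have := mul_le_mul_of_nonneg_left hxc (hdiag e).le
  refine mul_le_mul_of_nonneg_left ?_ (hb e).le
  rw [alphaLV, ← Finset.add_sum_erase _ _ (Finset.mem_univ e)]
  linarith

theorem tendsto_inv_diag (hb : ∀ i, 0 < b i) (hdiag : ∀ i, 0 < a i i)
    (hnn : ∀ i j, 0 ≤ a i j) (hsol : IsLVSolution b a x) (hx0 : ∀ i, 0 < x 0 i) {e : Fin n}
    (hext : ∀ k ≠ e, Tendsto (fun t => x t k) atTop (𝓝 0)) :
    Tendsto (fun t => x t e) atTop (𝓝 (a e e)⁻¹) := by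
  refine tendsto_order.2 ⟨fun c hc => ?_, fun c hc => ?_⟩
  · obtain ⟨c', hcc', hc'⟩ := exists_between (max_lt hc (inv_pos.2 (hdiag e)))
    filter_upwards [hsol.eventually_ge_of_lt_inv_diag hb hdiag hx0 hext
      ((le_max_right _ _).trans_lt hcc') hc'] with t ht
    exact (le_max_left _ _).trans_lt (hcc'.trans_le ht)
  · obtain ⟨c', hc', hcc'⟩ := exists_between hc
    filter_upwards [hsol.eventually_le_of_inv_diag_lt hb hdiag hnn hc'] with t ht
    exact ht.trans_lt hcc'

theorem exists_eventually_le_rootSum (hb : ∀ i, 0 < b i) (hsol : IsLVSolution b a x)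
    (hx0 : ∀ i, 0 < x 0 i) {l : Fin n} (hlow : ∀ k < l, Tendsto (fun t => x t k) atTop (𝓝 0)) :
    ∃ ρ > 0, ∀ᶠ t in atTop, ρ ≤ rootSum b (Finset.Ici l) (x t) := by
  obtain ⟨δ, hδ, hαδ⟩ := exists_pos_forall_alphaLV_le_half a
  obtain ⟨ρ, hρδ, hρ⟩ : ∃ ρ, (∀ k, ρ ^ b k ≤ δ) ∧ 0 < ρ :=
    ((eventually_all.2 fun k =>
      (Real.continuousAt_rpow_const 0 (b k) (Or.inr (hb k).le)).eventually (eventually_le_nhds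
        (show (0 : ℝ) ^ b k < δ by rwa [Real.zero_rpow (hb k).ne']))).filter_mono
      nhdsWithin_le_nhds |>.and self_mem_nhdsWithin).exists (f := 𝓝[>] (0 : ℝ))
  have hsmall : ∀ᶠ t in atTop, ∀ k ∈ Finset.Iio l, x t k ≤ δ :=
    (Finset.eventually_all _).2 fun k hk =>
      (hlow k (Finset.mem_Iio.1 hk)).eventually (eventually_le_nhds hδ)
  have hQ : ∀ t, 0 ≤ t → 0 < rootSum b (Finset.Ici l) (x t) := fun t ht =>
    rootSum_pos ⟨l, Finset.mem_Ici.2 le_rfl⟩ fun k => hsol.pos hx0 k ht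
  -- near the face `x_k = 0 (k ≥ l)` all `α_i ≤ 1/2`, so the root sum grows
  have hlog := eventually_ge_of_hasDerivAt_ge_pos (m := Real.log ρ) (h := 1 / 2) one_half_pos
    ((eventually_gt_atTop 0).mono fun t ht =>
      (hsol.hasDerivAt_rootSum hb hx0 _ ht).log (hQ t ht.le).ne') ?_
  · refine ⟨ρ, hρ, ?_⟩
    filter_upwards [hlog, eventually_ge_atTop 0] with t ht ht0
    exact (Real.log_le_log_iff hρ (hQ t ht0)).1 ht
  filter_upwards [hsmall, eventually_gt_atTop 0] with t hsmall ht hQρ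
  rw [Real.log_le_log_iff (hQ t ht.le) hρ] at hQρ
  have hx : ∀ k, |x t k| ≤ δ := by
    intro k
    rw [abs_of_pos (hsol.pos hx0 k ht.le)]
    rcases lt_or_ge k l with hkl | hlk
    · exact hsmall k (Finset.mem_Iio.2 hkl)
    · have := (rpow_inv_le_rootSum (fun j => (hsol.pos hx0 j ht.le).le)
        (Finset.mem_Ici.2 hlk)).trans hQρ
      rw [Real.rpow_inv_le_iff_of_pos (hsol.pos hx0 k ht.le).le hρ.le (hb k)] at this
      exact this.trans (hρδ k)
  rw [le_div_iff₀ (hQ t ht.le), rootSum, Finset.mul_sum]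
  refine Finset.sum_le_sum fun j _ => ?_
  nlinarith [hαδ _ hx j, Real.rpow_pos_of_pos (hsol.pos hx0 j ht.le) (b j)⁻¹]

theorem hasDerivAt_log_sub_log_rootSum (hb : ∀ i, 0 < b i) (hsol : IsLVSolution b a x)
    (hx0 : ∀ i, 0 < x 0 i) {l : Fin n} (hS : (Finset.Ioi l).Nonempty) {t : ℝ} (ht : 0 < t) :
    HasDerivAt
      (fun s => Real.log (x s l ^ (b l)⁻¹) - Real.log (rootSum b (Finset.Ioi l) (x s)))
      ((1 - alphaLV a l (x t)) - (∑ j ∈ Finset.Ioi l, x t j ^ (b j)⁻¹ *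
        (1 - alphaLV a j (x t))) / rootSum b (Finset.Ioi l) (x t)) t := by
  have hξ := Real.rpow_pos_of_pos (hsol.pos hx0 l ht.le) (b l)⁻¹
  refine (((hsol.hasDerivAt_rpow_inv hb hx0 l ht).log hξ.ne').sub
    ((hsol.hasDerivAt_rootSum hb hx0 _ ht).log
      (rootSum_pos hS fun k => hsol.pos hx0 k ht.le).ne')).congr_deriv ?_
  rw [mul_div_cancel_left₀ _ hξ.ne']

theorem tendsto_log_sub_log_rootSum_atBot (hb : ∀ i, 0 < b i) (hnn : ∀ i j, 0 ≤ a i j)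
    (hsol : IsLVSolution b a x) (hx0 : ∀ i, 0 < x 0 i) {l : Fin n}
    (hS : (Finset.Ioi l).Nonempty) (hdom : ∀ j, l < j → a j l < a l l)
    (hcoef : ∀ j, l < j → ∀ k, l ≤ k → a j k ≤ a l k)
    (hlow : ∀ k < l, Tendsto (fun t => x t k) atTop (𝓝 0)) :
    Tendsto (fun t => Real.log (x t l ^ (b l)⁻¹) - Real.log (rootSum b (Finset.Ioi l) (x t)))
      atTop atBot := by
  obtain ⟨ρ, hρ, hQ⟩ := hsol.exists_eventually_le_rootSum hb hx0 hlow
  have hγex : ∀ᶠ γ in 𝓝[>] (0 : ℝ), ∀ j, l < j → γ ≤ a l l - a j l :=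
    eventually_all.2 fun j => eventually_imp_distrib_left.2 fun hj =>
      (eventually_le_nhds (sub_pos.2 (hdom j hj))).filter_mono nhdsWithin_le_nhds
  obtain ⟨γ, hγ, hγpos⟩ := (hγex.and self_mem_nhdsWithin).exists
  have hw : Tendsto (fun t => ∑ i, ∑ k ∈ Finset.Iio l, a i k * x t k) atTop (𝓝 0) := by
    simpa only [mul_zero, Finset.sum_const_zero] using tendsto_finsetSum _ fun i _ =>
      tendsto_finsetSum _ fun k hk => (hlow k (Finset.mem_Iio.1 hk)).const_mul (a i k)
  refine tendsto_atBot.2 fun K => ?_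
  -- above level `K`, the persistence of `Σ_{j≥l} ξ_j` forces `ξ_l ≥ ρ / (1 + exp (-K))`
  set c := (ρ / (1 + Real.exp (-K))) ^ b l
  have hc : 0 < c := Real.rpow_pos_of_pos (div_pos hρ (by positivity)) _
  refine eventually_le_of_hasDerivAt_le_neg (h := γ * c / 2) (by positivity)
    ((eventually_gt_atTop 0).mono fun t ht => hsol.hasDerivAt_log_sub_log_rootSum hb hx0 hS ht) ?_
  filter_upwards [hQ, hw.eventually (eventually_le_nhds (half_pos (mul_pos hγpos hc))),
    eventually_gt_atTop 0] with t hQt hwt ht hKu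
  have hξ := Real.rpow_pos_of_pos (hsol.pos hx0 l ht.le) (b l)⁻¹
  have hP := rootSum_pos (b := b) hS fun k => hsol.pos hx0 k ht.le
  rw [← Real.log_div hξ.ne' hP.ne', Real.le_log_iff_exp_le (div_pos hξ hP), le_div_iff₀ hP] at hKu
  rw [rootSum_Ici] at hQt
  have hPξ : rootSum b (Finset.Ioi l) (x t) ≤ Real.exp (-K) * x t l ^ (b l)⁻¹ := by
    calc rootSum b (Finset.Ioi l) (x t)
        = Real.exp (-K) * (Real.exp K * rootSum b (Finset.Ioi l) (x t)) := by
          rw [← mul_assoc, ← Real.exp_add, neg_add_cancel, Real.exp_zero, one_mul]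
      _ ≤ Real.exp (-K) * x t l ^ (b l)⁻¹ := mul_le_mul_of_nonneg_left hKu (Real.exp_pos _).le
  have hξρ : ρ / (1 + Real.exp (-K)) ≤ x t l ^ (b l)⁻¹ := by
    rw [div_le_iff₀ (by positivity)]
    linarith
  have hxl : c ≤ x t l :=
    (Real.le_rpow_inv_iff_of_pos (div_pos hρ (by positivity)).le (hsol.1 t ht.le l) (hb l)).1 hξρ
  have := one_sub_alphaLV_sub_div_rootSum_le (b := b) hnn hS hcoef hγ fun k => hsol.pos hx0 k ht.le
  nlinarith

theorem tendsto_zero_of_lower_tendsto_zero (hb : ∀ i, 0 < b i) (hdiag : ∀ i, 0 < a i i)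
    (hnn : ∀ i j, 0 ≤ a i j) (hsol : IsLVSolution b a x) (hx0 : ∀ i, 0 < x 0 i) {l e : Fin n}
    (hle : l < e) (hdom : ∀ j, l < j → a j l < a l l)
    (hcoef : ∀ j, l < j → ∀ k, l ≤ k → a j k ≤ a l k)
    (hlow : ∀ k < l, Tendsto (fun t => x t k) atTop (𝓝 0)) :
    Tendsto (fun t => x t l) atTop (𝓝 0) := by
  have hS : (Finset.Ioi l).Nonempty := ⟨e, Finset.mem_Ioi.2 hle⟩
  have hu := hsol.tendsto_log_sub_log_rootSum_atBot hb hnn hx0 hS hdom hcoef hlow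
  set B := ∑ j ∈ Finset.Ioi l, (2 * (a j j)⁻¹) ^ (b j)⁻¹
  have hPB : ∀ᶠ t in atTop, rootSum b (Finset.Ioi l) (x t) ≤ B := by
    filter_upwards [eventually_all.2 fun j => hsol.eventually_le_of_inv_diag_lt hb hdiag hnn
      (lt_two_mul_self (inv_pos.2 (hdiag j))), eventually_ge_atTop 0] with t hxt ht
    exact Finset.sum_le_sum fun j _ =>
      Real.rpow_le_rpow (hsol.1 t ht j) (hxt j) (inv_nonneg.2 (hb j).le)
  have hξ : Tendsto (fun t => x t l ^ (b l)⁻¹) atTop (𝓝 0) := by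
    refine squeeze_zero' ((eventually_ge_atTop 0).mono fun t ht =>
      Real.rpow_nonneg (hsol.1 t ht l) _) ?_
      (by simpa using (Real.tendsto_exp_atBot.comp hu).mul_const B)
    filter_upwards [hPB, eventually_ge_atTop 0] with t hPt ht
    have hP := rootSum_pos (b := b) hS fun k => hsol.pos hx0 k ht
    rw [Real.exp_sub, Real.exp_log hP,
      Real.exp_log (Real.rpow_pos_of_pos (hsol.pos hx0 l ht) _), div_mul_eq_mul_div,
      le_div_iff₀ hP]
    exact mul_le_mul_of_nonneg_left hPt (Real.rpow_nonneg (hsol.1 t ht l) _)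
  have hpow := (Real.continuousAt_rpow_const 0 (b l) (Or.inr (hb l).le)).tendsto.comp hξ
  rw [Real.zero_rpow (hb l).ne'] at hpow
  exact hpow.congr' ((eventually_ge_atTop 0).mono fun t ht =>
    Real.rpow_inv_rpow (hsol.1 t ht l) (hb l).ne')

end IsLVSolution

section Attractor

variable {n : ℕ} {b : Fin n → ℝ} {a : Fin n → Fin n → ℝ}

theorem isLVEquilibrium_single (hdiag : ∀ i, 0 < a i i) (e : Fin n) :
    IsLVEquilibrium b a (Pi.single e (a e e)⁻¹) := by
  refine ⟨(Pi.single_nonneg.2 (inv_nonneg.2 (hdiag e).le) : (0 : Fin n → ℝ) ≤ _), fun i => ?_⟩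
  by_cases hi : i = e
  · subst hi
    rw [alphaLV_single, mul_inv_cancel₀ (hdiag i).ne']
    ring
  · simp [hi]

theorem isGlobalAttractor_single (hb : ∀ i, 0 < b i) (hdiag : ∀ i, 0 < a i i)
    (hnn : ∀ i j, 0 ≤ a i j) {e : Fin n} (he : IsTop e)
    (hdom : ∀ l j, l < j → a j l < a l l)
    (hcoef : ∀ l j, l < j → ∀ k, l ≤ k → a j k ≤ a l k) :
    IsGlobalAttractor b a (Pi.single e (a e e)⁻¹) := by
  refine ⟨isLVEquilibrium_single hdiag e, fun x hsol hx0 => ?_⟩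
  have hext : ∀ l, l < e → Tendsto (fun t => x t l) atTop (𝓝 0) := by
    intro l
    induction l using WellFoundedLT.induction with
    | _ l ih =>
      intro hl
      exact hsol.tendsto_zero_of_lower_tendsto_zero hb hdiag hnn hx0 hl (hdom l) (hcoef l)
        fun k hk => ih k hk (hk.trans hl)
  intro i
  rcases (he i).lt_or_eq with hi | rfl
  · simpa [hi.ne] using hext i hi
  · simpa using hsol.tendsto_inv_diag hb hdiag hnn hx0 fun k hk => hext k ((he k).lt_of_ne hk)

end Attractor

theorem corollary2_13_general (n : ℕ) (b : Fin n → ℝ) (a : Fin n → Fin n → ℝ)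
    (hb : ∀ i, 0 < b i) (hdiag : ∀ i, 0 < a i i) (hnn : ∀ i j, 0 ≤ a i j)
    (h : ∀ l j : Fin n, l < j →
      alphaLV a j (projLV (Yvec a) ({l} : Set (Fin n))) < 1 ∧
      ∀ y : Fin n → ℝ, (∀ i, 0 ≤ y i) → alphaLV a l y = 1 →
        (∀ t : Fin n, t < l → y t = 0) → alphaLV a j y ≤ 1) :
    IsGlobalAttractor b a (projLV (Yvec a) {j : Fin n | (j : ℕ) = n - 1}) := by
  rcases n with _ | m
  · exact ⟨⟨finZeroElim, finZeroElim⟩, fun _ _ _ => finZeroElim⟩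
  have hlast : {j : Fin (m + 1) | (j : ℕ) = m + 1 - 1} = {Fin.last m} := by
    ext j
    simp [Fin.ext_iff]
  rw [hlast, projLV_singleton]
  exact isGlobalAttractor_single hb hdiag hnn Fin.le_last
    (fun l j hlj => lt_diag_of_alphaLV_single_lt_one hdiag (h l j hlj).1)
    fun l j hlj _ => le_of_alphaLV_single_lt_one_of_face hdiag hnn (h l j hlj).1 (h l j hlj).2

/-- Corollary 2.13: if for every `ℓ < j` the point `Y^{{ℓ}}` is below `γ_j` and
every point of `γ_ℓ ∩ π_1 ∩ ⋯ ∩ π_{ℓ-1}` is on or below `γ_j`, then `Y^{{n}}`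
is a global attractor. -/
theorem corollary2_13 (n : ℕ) (hn : 2 ≤ n) (b : Fin n → ℝ) (a : Fin n → Fin n → ℝ)
    (hb : ∀ i, 0 < b i) (hdiag : ∀ i, 0 < a i i) (hnn : ∀ i j, 0 ≤ a i j)
    (h : ∀ l j : Fin n, l < j →
      alphaLV a j (projLV (Yvec a) ({l} : Set (Fin n))) < 1 ∧
      ∀ y : Fin n → ℝ, (∀ i, 0 ≤ y i) → alphaLV a l y = 1 →
        (∀ t : Fin n, t < l → y t = 0) → alphaLV a j y ≤ 1) :
    IsGlobalAttractor b a (projLV (Yvec a) {j : Fin n | (j : ℕ) = n - 1}) :=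
  corollary2_13_general n b a hb hdiag hnn h
end
end

section
/- Let J ⊆ I_n with |J| > 1. If condition (C_i) holds for all i ∈ J, then condition (3.7) holds for all i, j ∈ J with i ≠ j. -/
open Filter Topology Set

noncomputable section

/-!
The key property of `U` is that a point `x ≥ 0` on or above `γ_i` and on or below `γ_j`
(`i ≠ j`) has `x_j ≤ U_j`: writing `α_i x - a_ij x_j ≤ ρ (α_j x - a_jj x_j)` with `ρ` the
largest ratio `a_il / a_jl` (`l ≠ j`) bounds `x_j` by one of the quotients defining `U_j`.

Condition `(C_k)` says that a point of `[0, U^{I∖{k}}]` on or above `γ_k`, scaled back onto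
`γ_k`, lies above every other `γ_j`. For `v = U^{I∖{i,j}}` on or above `γ_i`, `(C_i)` and
`(C_j)` would give `α_i v < α_j v < α_i v`; so `v` is below `γ_i`. If the second inequality
of (3.7) failed, the point `v + t e_j` on `γ_i` would be on or below `γ_j`, hence `t ≤ U_j`,
hence it would lie in `[0, U^{I∖{i}}]`, contradicting `(C_i)`.
-/

section

variable {n : ℕ} {a : Fin n → Fin n → ℝ} {i j k : Fin n} {x : Fin n → ℝ}

lemma alphaLV_eq_dotProduct (a : Fin n → Fin n → ℝ) (i : Fin n) (x : Fin n → ℝ) :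
    alphaLV a i x = a i ⬝ᵥ x :=
  rfl

lemma alphaLV_mono (hnn : ∀ i j, 0 ≤ a i j) (i : Fin n) {x y : Fin n → ℝ} (h : x ≤ y) :
    alphaLV a i x ≤ alphaLV a i y :=
  dotProduct_le_dotProduct_of_nonneg_left h (hnn i)

lemma alphaLV_smul (a : Fin n → Fin n → ℝ) (i : Fin n) (s : ℝ) (x : Fin n → ℝ) :
    alphaLV a i (s • x) = s * alphaLV a i x :=
  dotProduct_smul s (a i) x

lemma alphaLV_add_single (a : Fin n → Fin n → ℝ) (i j : Fin n) (x : Fin n → ℝ) (t : ℝ) :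
    alphaLV a i (x + Pi.single j t) = alphaLV a i x + a i j * t := by
  rw [alphaLV_eq_dotProduct, dotProduct_add, dotProduct_single, alphaLV_eq_dotProduct]

lemma alphaLV_eq_add_sum_erase (a : Fin n → Fin n → ℝ) (i j : Fin n) (x : Fin n → ℝ) :
    alphaLV a i x = a i j * x j + ∑ l ∈ Finset.univ.erase j, a i l * x l :=
  (Finset.add_sum_erase _ (fun l => a i l * x l) (Finset.mem_univ j)).symm

lemma projLV_eq_indicator (U : Fin n → ℝ) (A : Set (Fin n)) : projLV U A = A.indicator U := by
  ext l
  simp only [projLV, Set.indicator]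

lemma projLV_nonneg {U : Fin n → ℝ} (hU : 0 ≤ U) (A : Set (Fin n)) : 0 ≤ projLV U A := by
  rw [projLV_eq_indicator]
  exact Set.indicator_nonneg fun l _ => hU l

lemma projLV_mono {U : Fin n → ℝ} (hU : 0 ≤ U) {A B : Set (Fin n)} (h : A ⊆ B) :
    projLV U A ≤ projLV U B := by
  simpa only [projLV_eq_indicator] using Set.indicator_le_indicator_of_subset h hU

lemma projLV_compl_pair_le (U : Fin n → ℝ) (hU : 0 ≤ U) (i j : Fin n) :
    projLV U ({i, j} : Set (Fin n))ᶜ ≤ projLV U ({i} : Set (Fin n))ᶜ :=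
  projLV_mono hU (Set.compl_subset_compl_of_subset (by simp))

theorem CondC.alphaLV_lt_alphaLV (hnn : ∀ i j, 0 ≤ a i j) {U : Fin n → ℝ} (hC : CondC a U k)
    {w : Fin n → ℝ} (hw₀ : 0 ≤ w) (hwU : w ≤ projLV U ({k} : Set (Fin n))ᶜ)
    (hk : 1 ≤ alphaLV a k w) (hjk : j ≠ k) : alphaLV a k w < alphaLV a j w := by
  rcases hC with hbelow | habove
  · exact absurd ((alphaLV_mono hnn k hwU).trans_lt hbelow) hk.not_gt
  · have hpos : 0 < alphaLV a k w := one_pos.trans_le hk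
    set s := (alphaLV a k w)⁻¹
    have hs₀ : 0 ≤ s := inv_nonneg.2 hpos.le
    have hs₁ : s ≤ 1 := inv_le_one_of_one_le₀ hk
    have hsw : alphaLV a k (s • w) = 1 := by rw [alphaLV_smul, inv_mul_cancel₀ hpos.ne']
    have hmem : ∀ l, 0 ≤ (s • w) l ∧ (s • w) l ≤ projLV U ({k} : Set (Fin n))ᶜ l := fun l =>
      ⟨mul_nonneg hs₀ (hw₀ l), (mul_le_of_le_one_left (hw₀ l) hs₁).trans (hwU l)⟩
    have := habove j hjk (s • w) hmem hsw
    rwa [alphaLV_smul, one_lt_inv_mul₀ hpos] at this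

theorem alphaLV_projLV_compl_pair_lt_one (hnn : ∀ i j, 0 ≤ a i j) {U : Fin n → ℝ} (hU : 0 ≤ U)
    (hij : i ≠ j) (hCi : CondC a U i) (hCj : CondC a U j) :
    alphaLV a i (projLV U ({i, j} : Set (Fin n))ᶜ) < 1 := by
  set v := projLV U ({i, j} : Set (Fin n))ᶜ
  by_contra! hv
  have hv₀ : 0 ≤ v := projLV_nonneg hU _
  have hvi : v ≤ projLV U ({i} : Set (Fin n))ᶜ := projLV_compl_pair_le U hU i j
  have hvj : v ≤ projLV U ({j} : Set (Fin n))ᶜ := by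
    rw [show v = projLV U ({j, i} : Set (Fin n))ᶜ by rw [Set.pair_comm]]
    exact projLV_compl_pair_le U hU j i
  have hij' := hCi.alphaLV_lt_alphaLV hnn hv₀ hvi hv hij.symm
  have hji' := hCj.alphaLV_lt_alphaLV hnn hv₀ hvj (by linarith) hij
  linarith

/-- The set whose supremum is the third case of `Uvec a univ i`, written exactly as there so
that the two agree definitionally. -/
def uSupSet (a : Fin n → Fin n → ℝ) (i : Fin n) : Set ℝ :=
  {r | ∃ j ∈ (Set.univ : Set (Fin n)), ∃ k ∈ (Set.univ : Set (Fin n)), j ≠ i ∧ k ≠ i ∧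
    a i j < a k j ∧ r = (a k j - a i j) / (a i i * a k j - a i j * a k i)}

lemma bddAbove_uSupSet (a : Fin n → Fin n → ℝ) (i : Fin n) : BddAbove (uSupSet a i) := by
  refine ((Set.finite_range fun p : Fin n × Fin n =>
    (a p.2 p.1 - a i p.1) / (a i i * a p.2 p.1 - a i p.1 * a p.2 i)).subset ?_).bddAbove
  rintro r ⟨j, -, k, -, -, -, -, rfl⟩
  exact ⟨(j, k), rfl⟩

lemma sSup_uSupSet_nonneg (hnn : ∀ i j, 0 ≤ a i j) (hcol : ∀ k, k ≠ i → a k i < a i i) :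
    0 ≤ sSup (uSupSet a i) := by
  refine Real.sSup_nonneg ?_
  rintro r ⟨j, -, k, -, -, hk, hjk, rfl⟩
  have hden : 0 < a i i * a k j - a i j * a k i := by
    nlinarith [hnn i j, hnn k i, hcol k hk]
  exact div_nonneg (by linarith) hden.le

theorem Uvec_univ_nonneg (hdiag : ∀ i, 0 < a i i) (hnn : ∀ i j, 0 ≤ a i j) :
    0 ≤ Uvec a Set.univ := by
  intro i
  unfold Uvec
  split_ifs with hfirst
  · exact inv_nonneg.2 (hdiag i).le
  · exact le_rfl
  · push Not at hfirst
    exact sSup_uSupSet_nonneg hnn fun k hk => (hfirst k (Set.mem_univ k) hk).1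

lemma one_sub_mul_le_mul_one_sub (hx : 0 ≤ x) (hi : 1 ≤ alphaLV a i x)
    (hj : alphaLV a j x ≤ 1) {ρ : ℝ} (hρ : 0 ≤ ρ) (hrow : ∀ l, l ≠ j → a i l ≤ ρ * a j l) :
    1 - a i j * x j ≤ ρ * (1 - a j j * x j) := by
  rw [alphaLV_eq_add_sum_erase a i j] at hi
  rw [alphaLV_eq_add_sum_erase a j j] at hj
  calc 1 - a i j * x j ≤ ∑ l ∈ Finset.univ.erase j, a i l * x l := by linarith
    _ ≤ ∑ l ∈ Finset.univ.erase j, ρ * (a j l * x l) := by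
      refine Finset.sum_le_sum fun l hl => ?_
      rw [← mul_assoc]
      exact mul_le_mul_of_nonneg_right (hrow l (Finset.ne_of_mem_erase hl)) (hx l)
    _ ≤ ρ * (1 - a j j * x j) := by
      rw [← Finset.mul_sum]
      exact mul_le_mul_of_nonneg_left (by linarith) hρ

lemma nonpos_of_row_le_row (hx : 0 ≤ x) (hi : 1 ≤ alphaLV a i x) (hj : alphaLV a j x ≤ 1)
    (hrow : ∀ l, l ≠ j → a i l ≤ a j l) (hij : a i j < a j j) : x j ≤ 0 := by
  have := one_sub_mul_le_mul_one_sub hx hi hj zero_le_one fun l hl => by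
    rw [one_mul]
    exact hrow l hl
  nlinarith

lemma le_sSup_uSupSet (hnn : ∀ i j, 0 ≤ a i j) (hij : i ≠ j) (hx : 0 ≤ x)
    (hi : 1 ≤ alphaLV a i x) (hj : alphaLV a j x ≤ 1) (hcol : ∀ k, k ≠ j → a k j < a j j)
    (hrow : ∀ l, l ≠ j → 0 < a j l) : x j ≤ sSup (uSupSet a j) := by
  obtain ⟨l, hl, hmax⟩ := Finset.exists_max_image (Finset.univ.erase j)
    (fun l => a i l / a j l) ⟨i, Finset.mem_erase.2 ⟨hij, Finset.mem_univ i⟩⟩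
  have hlj : l ≠ j := Finset.ne_of_mem_erase hl
  have hp : 0 < a j l := hrow l hlj
  have hratio : ∀ l', l' ≠ j → a i l' ≤ a i l / a j l * a j l' := fun l' hl' =>
    (div_le_iff₀ (hrow l' hl')).1 (hmax l' (Finset.mem_erase.2 ⟨hl', Finset.mem_univ l'⟩))
  rcases le_or_gt (a i l) (a j l) with hqp | hpq
  · have hle : a i l / a j l ≤ 1 := (div_le_one hp).2 hqp
    exact (nonpos_of_row_le_row hx hi hj (fun l' hl' => (hratio l' hl').trans
      (mul_le_of_le_one_left (hnn j l') hle)) (hcol i hij)).trans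
      (sSup_uSupSet_nonneg hnn hcol)
  · have hmem : (a i l - a j l) / (a j j * a i l - a j l * a i j) ∈ uSupSet a j :=
      ⟨l, Set.mem_univ l, i, Set.mem_univ i, hlj, hij, hpq, rfl⟩
    have hden : 0 < a j j * a i l - a j l * a i j := by nlinarith [hnn i j, hcol i hij]
    have key := one_sub_mul_le_mul_one_sub hx hi hj (div_nonneg (hnn i l) hp.le) hratio
    rw [div_mul_eq_mul_div, le_div_iff₀ hp] at key
    refine le_csSup_of_le (bddAbove_uSupSet a j) hmem ?_
    rw [le_div_iff₀ hden]
    linarith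

theorem le_Uvec_univ (hdiag : ∀ i, 0 < a i i) (hnn : ∀ i j, 0 ≤ a i j) (hij : i ≠ j)
    (hx : 0 ≤ x) (hi : 1 ≤ alphaLV a i x) (hj : alphaLV a j x ≤ 1) :
    x j ≤ Uvec a Set.univ j := by
  unfold Uvec
  split_ifs with hfirst hsecond
  · have hjj : a j j * x j ≤ alphaLV a j x :=
      Finset.single_le_sum (fun l _ => mul_nonneg (hnn j l) (hx l)) (Finset.mem_univ j)
    rw [← one_div, le_div_iff₀ (hdiag j)]
    linarith
  · simp only [Set.mem_univ, true_implies] at hsecond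
    exact nonpos_of_row_le_row hx hi hj (hsecond.2 i · hij) (hsecond.1 i hij)
  · push Not at hfirst
    exact le_sSup_uSupSet hnn hij hx hi hj (fun k hk => (hfirst k (Set.mem_univ k) hk).1)
      fun l hl => (hnn j l).lt_of_ne' (hfirst l (Set.mem_univ l) hl).2

theorem div_mul_one_sub_alphaLV_lt (hdiag : ∀ i, 0 < a i i) (hnn : ∀ i j, 0 ≤ a i j)
    (hij : i ≠ j) (hCi : CondC a (Uvec a Set.univ) i)
    (hbelow : alphaLV a i (projLV (Uvec a Set.univ) ({i, j} : Set (Fin n))ᶜ) < 1) :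
    a i j / a j j * (1 - alphaLV a j (projLV (Uvec a Set.univ) ({i, j} : Set (Fin n))ᶜ)) <
      1 - alphaLV a i (projLV (Uvec a Set.univ) ({i, j} : Set (Fin n))ᶜ) := by
  set U := Uvec a Set.univ
  set v := projLV U ({i, j} : Set (Fin n))ᶜ
  have hU : 0 ≤ U := Uvec_univ_nonneg hdiag hnn
  by_contra! hge
  rw [div_mul_eq_mul_div, le_div_iff₀ (hdiag j)] at hge
  have haij : 0 < a i j := (hnn i j).lt_of_ne' fun h => by
    rw [h, zero_mul] at hge
    nlinarith [hdiag j]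
  set t := (1 - alphaLV a i v) / a i j
  set p := v + Pi.single j t
  have hpi : alphaLV a i p = 1 := by
    rw [alphaLV_add_single, mul_div_cancel₀ _ haij.ne']
    ring
  have hpj : alphaLV a j p ≤ 1 := by
    have : a j j * t ≤ 1 - alphaLV a j v := by
      rw [mul_div_assoc', div_le_iff₀ haij]
      linarith
    rw [alphaLV_add_single]
    linarith
  have hp₀ : 0 ≤ p := add_nonneg (projLV_nonneg hU _)
    (Pi.single_nonneg.2 (div_nonneg (by linarith) haij.le))
  have hpU : p ≤ projLV U ({i} : Set (Fin n))ᶜ := by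
    intro l
    by_cases hl : l = j
    · subst hl
      simpa only [projLV, Set.mem_compl_singleton_iff.2 hij.symm, if_true] using
        le_Uvec_univ hdiag hnn hij hp₀ hpi.ge hpj
    · simpa [p, hl] using projLV_compl_pair_le U hU i j l
  linarith [hCi.alphaLV_lt_alphaLV hnn hp₀ hpU hpi.ge hij.symm]

end

theorem lemma3_2_i_general (n : ℕ) (a : Fin n → Fin n → ℝ)
    (hdiag : ∀ i, 0 < a i i) (hnn : ∀ i j, 0 ≤ a i j)
    (J : Set (Fin n))
    (hC : ∀ i ∈ J, CondC a (Uvec a Set.univ) i) :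
    ∀ i ∈ J, ∀ j ∈ J, i ≠ j → Cond37 a (Uvec a Set.univ) i j := by
  intro i hi j hj hij
  have hbelow := alphaLV_projLV_compl_pair_lt_one hnn (Uvec_univ_nonneg hdiag hnn) hij
    (hC i hi) (hC j hj)
  exact max_lt (sub_pos.2 hbelow) (div_mul_one_sub_alphaLV_lt hdiag hnn hij (hC i hi) hbelow)

/-- Lemma 3.2(i): for `J ⊆ I_n` with `|J| > 1`, condition `(C_i)` for all `i ∈ J`
implies (3.7) for all `i, j ∈ J` with `i ≠ j`. -/
theorem lemma3_2_i (n : ℕ) (hn : 2 ≤ n) (b : Fin n → ℝ) (a : Fin n → Fin n → ℝ)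
    (hb : ∀ i, 0 < b i) (hdiag : ∀ i, 0 < a i i) (hnn : ∀ i j, 0 ≤ a i j)
    (J : Set (Fin n)) (hJ : 1 < J.ncard)
    (hC : ∀ i ∈ J, CondC a (Uvec a Set.univ) i) :
    ∀ i ∈ J, ∀ j ∈ J, i ≠ j → Cond37 a (Uvec a Set.univ) i j :=
  lemma3_2_i_general n a hdiag hnn J hC
end
end
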